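/- Let K be an integral domain and let x_α(a) := 1 + a·E₁₂ and x_β(b) := 1 + b·E₂₃ denote 3×3 matrices over K. Then: (i) if x_α(a₁)·x_β(b₁) = 1 then a₁ = 0 and b₁ = 0; (ii) if x_α(a₁)·x_β(b₁)·x_α(a₂)·x_β(b₂) = 1 then at least one of a₁, b₁, a₂, b₂ equals 0; (iii) if K has more than two elements, then there exist a₁, b₁, a₂, b₂, a₃, b₃ ∈ K, all nonzero, such that x_α(a₁)·x_β(b₁)·x_α(a₂)·x_β(b₂)·x_α(a₃)·x_β(b₃) = 1. (Equivalently, the coset graph of the unipotent group of type A₂ over K with respect to its two simple root subgroups has girth 6 when |K| > 2.) -/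

import Mathlib

/-- `x_α(a) = 1 + a·E₁₂` as a `3 × 3` matrix. -/
def xalpha (K : Type*) [CommRing K] (a : K) : Matrix (Fin 3) (Fin 3) K :=
  1 + Matrix.single 0 1 a

/-- `x_β(b) = 1 + b·E₂₃` as a `3 × 3` matrix. -/
def xbeta (K : Type*) [CommRing K] (b : K) : Matrix (Fin 3) (Fin 3) K :=
  1 + Matrix.single 1 2 b

/-- Upper unitriangular `3×3` matrix. -/
def Tri {K : Type*} [CommRing K] (p q r : K) : Matrix (Fin 3) (Fin 3) K :=
  !![1, p, q; 0, 1, r; 0, 0, 1]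

lemma xab_eq {K : Type*} [CommRing K] (a b : K) :
    xalpha K a * xbeta K b = Tri a (a * b) b := by
  unfold xalpha xbeta Tri
  ext i j
  fin_cases i <;> fin_cases j <;>
    simp [Matrix.mul_apply, Fin.sum_univ_three, Matrix.single, Matrix.one_apply,
      Matrix.vecHead, Matrix.vecTail]

lemma tri_mul {K : Type*} [CommRing K] (p q r p' q' r' : K) :
    Tri p q r * Tri p' q' r' = Tri (p + p') (q + q' + p * r') (r + r') := by
  unfold Tri
  ext i j
  fin_cases i <;> fin_cases j <;>
    simp [Matrix.mul_apply, Fin.sum_univ_three, Matrix.vecHead, Matrix.vecTail] <;> ring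

lemma tri_one {K : Type*} [CommRing K] : (Tri 0 0 0 : Matrix (Fin 3) (Fin 3) K) = 1 := by
  unfold Tri
  ext i j
  fin_cases i <;> fin_cases j <;>
    simp [Matrix.one_apply, Matrix.vecHead, Matrix.vecTail]

lemma tri_eq_one {K : Type*} [CommRing K] {p q r : K} (h : Tri p q r = 1) :
    p = 0 ∧ q = 0 ∧ r = 0 := by
  refine ⟨?_, ?_, ?_⟩
  · have := congrFun (congrFun h 0) 1
    simpa [Tri, Matrix.one_apply] using this
  · have := congrFun (congrFun h 0) 2
    simpa [Tri, Matrix.one_apply, Matrix.vecHead, Matrix.vecTail] using this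
  · have := congrFun (congrFun h 1) 2
    simpa [Tri, Matrix.one_apply, Matrix.vecHead, Matrix.vecTail] using this

/-- In the unipotent group of type `A₂` over an integral domain `K`:
(i) `x_α(a₁)x_β(b₁) = 1` forces `a₁ = b₁ = 0`; (ii) `x_α(a₁)x_β(b₁)x_α(a₂)x_β(b₂) = 1`
forces one of the parameters to vanish; (iii) if `|K| > 2` there is a cycle of length 6:
nonzero `a₁, b₁, a₂, b₂, a₃, b₃` with `x_α(a₁)x_β(b₁)x_α(a₂)x_β(b₂)x_α(a₃)x_β(b₃) = 1`.
Equivalently, the coset graph of the unipotent group of type `A₂` over `K` with respect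
to its two simple root subgroups has girth `6` when `|K| > 2`. -/
theorem A2_coset_graph_girth
    (K : Type*) [CommRing K] [IsDomain K] :
    (∀ a₁ b₁ : K, xalpha K a₁ * xbeta K b₁ = 1 → a₁ = 0 ∧ b₁ = 0) ∧
    (∀ a₁ b₁ a₂ b₂ : K, xalpha K a₁ * xbeta K b₁ * xalpha K a₂ * xbeta K b₂ = 1 →
      a₁ = 0 ∨ b₁ = 0 ∨ a₂ = 0 ∨ b₂ = 0) ∧
    ((∃ x : K, x ≠ 0 ∧ x ≠ 1) →  -- `K` has more than two elements
      ∃ a₁ b₁ a₂ b₂ a₃ b₃ : K,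
        a₁ ≠ 0 ∧ b₁ ≠ 0 ∧ a₂ ≠ 0 ∧ b₂ ≠ 0 ∧ a₃ ≠ 0 ∧ b₃ ≠ 0 ∧
        xalpha K a₁ * xbeta K b₁ * xalpha K a₂ * xbeta K b₂ *
          xalpha K a₃ * xbeta K b₃ = 1) := by
  refine ⟨?_, ?_, ?_⟩
  · intro a₁ b₁ h
    rw [xab_eq] at h
    obtain ⟨h1, _, h3⟩ := tri_eq_one h
    exact ⟨h1, h3⟩
  · intro a₁ b₁ a₂ b₂ h
    rw [show xalpha K a₁ * xbeta K b₁ * xalpha K a₂ * xbeta K b₂ =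
        (xalpha K a₁ * xbeta K b₁) * (xalpha K a₂ * xbeta K b₂) by rw [mul_assoc],
      xab_eq, xab_eq, tri_mul] at h
    obtain ⟨h1, h2, h3⟩ := tri_eq_one h
    have ha : a₂ = -a₁ := by linear_combination h1
    have hb : b₂ = -b₁ := by linear_combination h3
    have : a₁ * b₁ = 0 := by
      rw [ha, hb] at h2; linear_combination h2
    rcases mul_eq_zero.mp this with h | h
    · exact Or.inl h
    · exact Or.inr (Or.inl h)
  · rintro ⟨x, hx0, hx1⟩
    -- choose s with s ≠ 0 and s + 1 ≠ 0
    obtain ⟨s, hs0, hs1⟩ : ∃ s : K, s ≠ 0 ∧ s + 1 ≠ 0 := by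
      by_cases hx : x + 1 = 0
      · refine ⟨1, one_ne_zero, ?_⟩
        intro h
        have : x = 1 := by linear_combination hx - h
        exact hx1 this
      · exact ⟨x, hx0, hx⟩
    refine ⟨-(s + 1), s, s, -(s * (1 + s)), 1, s * s, ?_, hs0, hs0, ?_, one_ne_zero, mul_ne_zero hs0 hs0, ?_⟩
    · exact fun h => hs1 (neg_eq_zero.mp h)
    · intro h
      rcases mul_eq_zero.mp (neg_eq_zero.mp h) with h | h
      · exact hs0 h
      · exact hs1 (by linear_combination h)
    · rw [show ∀ A B C D E F : Matrix (Fin 3) (Fin 3) K, A * B * C * D * E * F =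
        ((A * B) * (C * D)) * (E * F) from fun _ _ _ _ _ _ => by
          simp only [mul_assoc]]
      rw [xab_eq, xab_eq, xab_eq, tri_mul, tri_mul]
      rw [show -(s+1) + s + 1 = 0 by ring]
      rw [show s + -(s * (1 + s)) + (s * s) = 0 by ring]
      rw [show -(s + 1) * s + s * -(s * (1 + s)) + -(s + 1) * -(s * (1 + s)) +
        1 * (s * s) + (-(s + 1) + s) * (s * s) = 0 by ring]
      exact tri_one
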